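/- arXiv:2209.14725 — 4 statements merged into one kernel-verified Lean document; each statement's English description precedes it below -/
import Mathlib

section
/- Let k be an algebraically closed field, A an algebra over k, and let p_1, …, p_n : A^n → A be polynomial maps of positive degree. Suppose H ⊆ A is a finite-dimensional k-subspace such that the leading forms of p_1, …, p_n have no common zero in H^n ∖ {0}, and suppose there is a k-subspace H' ⊆ A with dim(H') ≤ dim(H) and p_i(H^n) ⊆ H' for i = 1, …, n. Then p_1, …, p_n have a common zero in H^n. -/
/-- Monomial maps `A^n → A` over an algebra `A` over `k`, where the (not necessarily
associative, commutative or unital) multiplication of `A` is given as a `k`-bilinear map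
`mul : A →ₗ[k] A →ₗ[k] A`.  They are generated by the constant maps, the coordinate
projections, the multiplication, and closed under composition. -/
inductive IsMonomialMap {k A : Type*} [Field k] [AddCommGroup A] [Module k A]
    (mul : A →ₗ[k] A →ₗ[k] A) : ∀ {n : ℕ}, ((Fin n → A) → A) → Prop
  | const {n : ℕ} (c : A) : IsMonomialMap mul (fun _ : Fin n → A => c)
  | proj {n : ℕ} (i : Fin n) : IsMonomialMap mul (fun a => a i)
  | mul' : IsMonomialMap mul (fun a : Fin 2 → A => mul (a 0) (a 1))
  | comp {n m : ℕ} {q : (Fin m → A) → A} {p : Fin m → ((Fin n → A) → A)} :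
      IsMonomialMap mul q → (∀ i, IsMonomialMap mul (p i)) →
      IsMonomialMap mul (fun a => q (fun i => p i a))

/-- A polynomial map is a finite `k`-linear combination of monomial maps. -/
def IsPolynomialMap {k A : Type*} [Field k] [AddCommGroup A] [Module k A]
    (mul : A →ₗ[k] A →ₗ[k] A) {n : ℕ} (p : (Fin n → A) → A) : Prop :=
  ∃ (m : ℕ) (c : Fin m → k) (q : Fin m → ((Fin n → A) → A)),
    (∀ j, IsMonomialMap mul (q j)) ∧ ∀ a, p a = ∑ j, c j • q j a

/-- A map `A^n → A` is homogeneous of degree `d` (w.r.t. the `k`-structure). -/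
def IsHomogeneousMap (k : Type*) {A : Type*} [Field k] [AddCommGroup A] [Module k A]
    {n : ℕ} (p : (Fin n → A) → A) (d : ℕ) : Prop :=
  ∀ (l : k) (a : Fin n → A), p (fun i => l • a i) = l ^ d • p a

/-- `p` is a polynomial map of degree `d` with leading form `L`:  `L` is a nonzero
homogeneous polynomial map of degree `d`, and `p` is `L` plus a sum of homogeneous
polynomial maps of degree `< d`. -/
def HasLeadingForm {k A : Type*} [Field k] [AddCommGroup A] [Module k A]
    (mul : A →ₗ[k] A →ₗ[k] A) {n : ℕ} (p L : (Fin n → A) → A) (d : ℕ) : Prop :=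
  IsPolynomialMap mul L ∧ IsHomogeneousMap k L d ∧ (∃ a, L a ≠ 0) ∧
    ∃ (m : ℕ) (r : Fin m → ((Fin n → A) → A)) (e : Fin m → ℕ),
      (∀ j, IsPolynomialMap mul (r j)) ∧ (∀ j, IsHomogeneousMap k (r j) (e j)) ∧
      (∀ j, e j < d) ∧ ∀ a, p a = L a + ∑ j, r j a

/-! Homogenize with one extra scalar variable `t`: `Pᵢ(t, a) = Lᵢ(a) + ∑ t^(dᵢ - e) • rᵢₑ(a)`
is homogeneous of degree `dᵢ`, equals `pᵢ` at `t = 1` and the leading form `Lᵢ` at `t = 0`.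
Writing `a ∈ Hⁿ` in a basis of `H` and reading values through `dim H'` linear coordinates that
are injective on `H'`, the equations `Pᵢ(t, a) = 0` become `n · dim H'` polynomial equations in
`n · dim H + 1` unknowns with the common zero `0`. By Krull's height theorem and the
Nullstellensatz they have a common zero `(t, a) ≠ 0`. Since the leading forms also map `Hⁿ`
into `H'`, `t = 0` would make `a ≠ 0` a common zero of the leading forms; so `t ≠ 0`, and `a / t`
is a common zero of the `pᵢ`. -/

open MvPolynomial

namespace MvPolynomial

variable {k σ : Type*} [Field k]

noncomputable def translate (v : σ → k) : MvPolynomial σ k ≃ₐ[k] MvPolynomial σ k :=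
  AlgEquiv.ofAlgHom (aeval fun i => X i + C (v i)) (aeval fun i => X i - C (v i))
    (by ext i; simp) (by ext i; simp)

lemma eval_translate (v x : σ → k) (p : MvPolynomial σ k) :
    eval x (translate v p) = eval (x + v) p := by
  change aeval x (aeval (fun i => X i + C (v i)) p) = _
  rw [← AlgHom.comp_apply, comp_aeval]
  simp [aeval_eq_eval, Pi.add_def]

lemma comap_translate_vanishingIdeal (v x : σ → k) :
    (vanishingIdeal k {x}).comap (translate v) = vanishingIdeal k {x + v} := by
  ext p
  simp [eval_translate]

variable [IsAlgClosed k] [Finite σ]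

/-- Translations show that all points have maximal ideals of the same height, and by the
Nullstellensatz these are all the maximal ideals, so that height is the Krull dimension. -/
lemma height_vanishingIdeal_singleton (x : σ → k) :
    ((vanishingIdeal k {x}).height : WithBot ℕ∞) = Nat.card σ := by
  have hdim : ringKrullDim (MvPolynomial σ k) = Nat.card σ := by
    simp [ringKrullDim_eq_zero_of_field]
  have heq : ∀ y : σ → k, (vanishingIdeal k {y}).height = (vanishingIdeal k {x}).height := by
    intro y
    rw [← add_sub_cancel x y, ← comap_translate_vanishingIdeal]
    exact RingEquiv.height_comap (translate (y - x)).toRingEquiv _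
  rw [← hdim]
  refine le_antisymm (Ideal.height_le_ringKrullDim_of_ne_top Ideal.IsPrime.ne_top') ?_
  refine (ringKrullDim_le_iff_isMaximal_height_le _).mpr fun m hm => ?_
  obtain ⟨y, rfl⟩ := isMaximal_iff_eq_vanishingIdeal_singleton.mp hm
  rw [heq]

/-- Otherwise the maximal ideal of `x₀` is the radical of the ideal spanned by the `F i`, and
Krull's height theorem bounds its height `card σ` by `card ι`. -/
theorem exists_ne_forall_eval_eq_zero_of_card_lt {ι : Type*} [Fintype ι]
    (F : ι → MvPolynomial σ k) (hcard : Fintype.card ι < Nat.card σ) (x₀ : σ → k)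
    (hx₀ : ∀ i, eval x₀ (F i) = 0) : ∃ x ≠ x₀, ∀ i, eval x (F i) = 0 := by
  classical
  by_contra! hcon
  set I := Ideal.span (Finset.univ.image F : Set (MvPolynomial σ k))
  have hrad : I.radical = vanishingIdeal k {x₀} := by
    rw [← vanishingIdeal_zeroLocus_eq_radical (K := k)]
    congr
    ext x
    simp only [I, zeroLocus_span, Finset.coe_image, Finset.coe_univ, Set.image_univ,
      Set.forall_mem_range, Set.mem_ofPred_eq, Set.mem_singleton_iff]
    exact ⟨fun h => by_contra fun hx => (hcon x hx).elim fun i hi => hi (h i),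
      fun h => h ▸ hx₀⟩
  have hmin : vanishingIdeal k {x₀} ∈ I.minimalPrimes := by
    rw [← Ideal.radical_minimalPrimes, hrad, Ideal.minimalPrimes_eq_subsingleton_self]
    rfl
  have hle : (vanishingIdeal k {x₀}).height ≤ Fintype.card ι :=
    (Ideal.height_le_card_of_mem_minimalPrimes_span_finset hmin).trans
      (by exact_mod_cast Finset.card_image_le)
  have h2 : (vanishingIdeal k {x₀}).height = Nat.card σ := by
    exact_mod_cast height_vanishingIdeal_singleton x₀
  rw [h2] at hle
  exact hcard.not_ge (by exact_mod_cast hle)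

end MvPolynomial

theorem Submodule.mem_of_forall_pow_smul_add_sum_mem {k A : Type*} [Field k] [Infinite k]
    [AddCommGroup A] [Module k A] {W : Submodule k A} {ι : Type*} [Fintype ι] {d : ℕ} {v : A}
    {w : ι → A} {e : ι → ℕ} (he : ∀ j, e j < d)
    (h : ∀ l : k, l ^ d • v + ∑ j, l ^ e j • w j ∈ W) : v ∈ W := by
  rw [← Submodule.Quotient.mk_eq_zero, ← Module.forall_dual_apply_eq_zero_iff k]
  intro φ
  let f : A →ₗ[k] k := φ ∘ₗ W.mkQ
  let q : Polynomial k := Polynomial.C (f v) * Polynomial.X ^ d +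
    ∑ j, Polynomial.C (f (w j)) * Polynomial.X ^ e j
  have hq : q = 0 := Polynomial.funext fun l => by
    have hl : f (l ^ d • v + ∑ j, l ^ e j • w j) = 0 := by
      simp [f, (Submodule.Quotient.mk_eq_zero W).mpr (h l)]
    simp only [map_add, map_sum, map_smul, smul_eq_mul, mul_comm (l ^ _)] at hl
    simpa only [q, Polynomial.eval_add, Polynomial.eval_finsetSum, Polynomial.eval_mul,
      Polynomial.eval_C, Polynomial.eval_pow, Polynomial.eval_X, Polynomial.eval_zero]
  have hcoeff := congrArg (Polynomial.coeff · d) hq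
  simp only [q, Polynomial.coeff_add, Polynomial.finsetSum_coeff,
    Polynomial.coeff_C_mul_X_pow, Polynomial.coeff_zero] at hcoeff
  rw [Finset.sum_eq_zero fun j _ => if_neg (he j).ne', add_zero] at hcoeff
  exact hcoeff

section PolyFunctions

variable (k : Type*) [Field k] (ι A : Type*) [AddCommGroup A] [Module k A]

def polyFunctions : Submodule k ((ι → k) → A) :=
  Submodule.span k (Set.range fun Pc : MvPolynomial ι k × A => fun x => eval x Pc.1 • Pc.2)

variable {k ι A}

lemma eval_smul_mem_polyFunctions (P : MvPolynomial ι k) (c : A) :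
    (fun x => eval x P • c) ∈ polyFunctions k ι A :=
  Submodule.subset_span ⟨(P, c), rfl⟩

lemma const_mem_polyFunctions (c : A) : (fun _ => c) ∈ polyFunctions k ι A := by
  simpa using eval_smul_mem_polyFunctions (1 : MvPolynomial ι k) c

lemma eval_smul_apply_mem_polyFunctions (P : MvPolynomial ι k) {f : (ι → k) → A}
    (hf : f ∈ polyFunctions k ι A) : (fun x => eval x P • f x) ∈ polyFunctions k ι A := by
  let T : ((ι → k) → A) →ₗ[k] ((ι → k) → A) := LinearMap.pi fun x => eval x P • LinearMap.proj x
  refine (Submodule.map_span_le T _ _).mpr ?_ (Submodule.mem_map_of_mem (f := T) hf)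
  rintro _ ⟨⟨Q, c⟩, rfl⟩
  convert eval_smul_mem_polyFunctions (P * Q) c using 1
  ext x
  simp [T, smul_smul]

lemma LinearMap.mem_polyFunctions [Fintype ι] [DecidableEq ι] (g : (ι → k) →ₗ[k] A) :
    ⇑g ∈ polyFunctions k ι A := by
  have : ⇑g = ∑ s, fun x => eval x (X s) • g fun t => if s = t then 1 else 0 := by
    ext x; simp [g.pi_apply_eq_sum_univ x]
  rw [this]
  exact Submodule.sum_mem _ fun s _ => eval_smul_mem_polyFunctions _ _

lemma bilinear_apply_mem_polyFunctions (B : A →ₗ[k] A →ₗ[k] A) {f g : (ι → k) → A}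
    (hf : f ∈ polyFunctions k ι A) (hg : g ∈ polyFunctions k ι A) :
    (fun x => B (f x) (g x)) ∈ polyFunctions k ι A := by
  let B' : ((ι → k) → A) →ₗ[k] ((ι → k) → A) →ₗ[k] ((ι → k) → A) :=
    LinearMap.mk₂ k (fun f g x => B (f x) (g x)) (by intros; ext; simp) (by intros; ext; simp)
      (by intros; ext; simp) (by intros; ext; simp)
  have h := Submodule.apply_mem_map₂ B' hf hg
  rw [polyFunctions, Submodule.map₂_span_span] at h
  refine Submodule.span_le.mpr ?_ h
  rintro _ ⟨_, ⟨⟨P, c⟩, rfl⟩, _, ⟨⟨Q, c'⟩, rfl⟩, rfl⟩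
  simpa [B', smul_smul] using eval_smul_mem_polyFunctions (Q * P) (B c c')

lemma IsMonomialMap.comp_mem_polyFunctions {mul : A →ₗ[k] A →ₗ[k] A} {m : ℕ}
    {q : (Fin m → A) → A} (hq : IsMonomialMap mul q) {f : Fin m → (ι → k) → A}
    (hf : ∀ i, f i ∈ polyFunctions k ι A) :
    (fun x => q fun i => f i x) ∈ polyFunctions k ι A := by
  induction hq with
  | const c => exact const_mem_polyFunctions c
  | proj i => exact hf i
  | mul' => exact bilinear_apply_mem_polyFunctions mul (hf 0) (hf 1)
  | comp _ _ ihq ihp => exact ihq fun i => ihp i hf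

lemma IsPolynomialMap.comp_mem_polyFunctions {mul : A →ₗ[k] A →ₗ[k] A} {m : ℕ}
    {p : (Fin m → A) → A} (hp : IsPolynomialMap mul p) {f : Fin m → (ι → k) → A}
    (hf : ∀ i, f i ∈ polyFunctions k ι A) :
    (fun x => p fun i => f i x) ∈ polyFunctions k ι A := by
  obtain ⟨m', c, q, hq, hpq⟩ := hp
  have : (fun x => p fun i => f i x) = ∑ j, c j • fun x => q j fun i => f i x := by
    ext x; simp [hpq]
  rw [this]
  exact Submodule.sum_mem _ fun j _ => Submodule.smul_mem _ _ ((hq j).comp_mem_polyFunctions hf)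

lemma exists_eval_eq_of_mem_polyFunctions (ψ : A →ₗ[k] k) {f : (ι → k) → A}
    (hf : f ∈ polyFunctions k ι A) : ∃ Q : MvPolynomial ι k, ∀ x, eval x Q = ψ (f x) := by
  induction hf using Submodule.span_induction with
  | mem g hg =>
    obtain ⟨⟨P, c⟩, rfl⟩ := hg
    exact ⟨ψ c • P, fun x => by simp [mul_comm]⟩
  | zero => exact ⟨0, fun x => by simp⟩
  | add g g' _ _ hg hg' =>
    obtain ⟨Q, hQ⟩ := hg
    obtain ⟨Q', hQ'⟩ := hg'
    exact ⟨Q + Q', fun x => by simp [hQ, hQ']⟩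
  | smul a g _ hg =>
    obtain ⟨Q, hQ⟩ := hg
    exact ⟨a • Q, fun x => by simp [hQ]⟩

end PolyFunctions

namespace HasLeadingForm

universe u

variable {k A : Type*} [Field k] [AddCommGroup A] [Module k A] {mul : A →ₗ[k] A →ₗ[k] A}
  {n d : ℕ} {p L : (Fin n → A) → A}

theorem exists_homogenization (h : HasLeadingForm mul p L d) :
    ∃ P : k → (Fin n → A) → A, (∀ a, P 1 a = p a) ∧ (∀ a, P 0 a = L a) ∧
      (∀ l t a, P (l * t) (l • a) = l ^ d • P t a) ∧
      ∀ {ι : Type u} (g : MvPolynomial ι k) (f : Fin n → (ι → k) → A),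
        (∀ ℓ, f ℓ ∈ polyFunctions k ι A) →
          (fun x => P (eval x g) fun ℓ => f ℓ x) ∈ polyFunctions k ι A := by
  obtain ⟨hLpoly, hLhom, -, m, r, e, hrpoly, hrhom, hlt, hp⟩ := h
  refine ⟨fun t a => L a + ∑ j, t ^ (d - e j) • r j a, fun a => by simp [hp],
    fun a => by simp [zero_pow (Nat.sub_ne_zero_of_lt (hlt _))], fun l t a => ?_,
    fun {ι} g f hf => ?_⟩
  · simp only [smul_add, Finset.smul_sum, smul_smul]
    rw [show l • a = fun i => l • a i from rfl, hLhom]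
    congr 1
    refine Finset.sum_congr rfl fun j _ => ?_
    rw [hrhom, smul_smul, mul_pow, mul_right_comm, ← pow_add, Nat.sub_add_cancel (hlt j).le]
  · have hsum := Submodule.sum_mem (polyFunctions k ι A) fun j (_ : j ∈ Finset.univ) =>
      eval_smul_apply_mem_polyFunctions (g ^ (d - e j)) ((hrpoly j).comp_mem_polyFunctions hf)
    convert Submodule.add_mem _ (hLpoly.comp_mem_polyFunctions hf) hsum using 1
    ext x
    simp

theorem apply_mem_of_forall_smul_mem [Infinite k] (h : HasLeadingForm mul p L d)
    {W : Submodule k A} {a : Fin n → A} (ha : ∀ l : k, p (l • a) ∈ W) : L a ∈ W := by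
  obtain ⟨-, hLhom, -, m, r, e, -, hrhom, hlt, hp⟩ := h
  refine Submodule.mem_of_forall_pow_smul_add_sum_mem (w := fun j => r j a) hlt fun l => ?_
  rw [← hLhom l a, Finset.sum_congr rfl fun j _ => (hrhom j l a).symm, ← hp]
  exact ha l

end HasLeadingForm

section Subspaces

variable {k A : Type*} [Field k] [AddCommGroup A] [Module k A]

theorem Submodule.exists_linearMap_injOn (W : Submodule k A) [FiniteDimensional k W] :
    ∃ Φ : A →ₗ[k] (Fin (Module.finrank k W) → k), Set.InjOn Φ W := by
  obtain ⟨Φ, hΦ⟩ := LinearMap.exists_extend (Module.finBasis k W).equivFun.toLinearMap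
  refine ⟨Φ, fun v hv w hw hvw => ?_⟩
  have h : ∀ u : W, Φ u = (Module.finBasis k W).equivFun u := fun u => congrArg (· u) hΦ
  simpa using (Module.finBasis k W).equivFun.injective
    ((h ⟨v, hv⟩).symm.trans (hvw.trans (h ⟨w, hw⟩)))

theorem Submodule.exists_injective_linearMap_pi (H : Submodule k A) [FiniteDimensional k H]
    (n : ℕ) : ∃ a : (Fin n × Fin (Module.finrank k H) → k) →ₗ[k] (Fin n → A),
      Function.Injective a ∧ ∀ x ℓ, a x ℓ ∈ H := by
  let e := (LinearEquiv.curry k k (Fin n) (Fin (Module.finrank k H))).trans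
    (LinearEquiv.piCongrRight fun _ => (Module.finBasis k H).equivFun.symm)
  refine ⟨H.subtype.compLeft (Fin n) ∘ₗ e.toLinearMap, ?_, fun x ℓ => (e x ℓ).2⟩
  exact H.injective_subtype.comp_left.comp e.injective

end Subspaces

theorem exists_ne_zero_forall_linearMap_apply_eq_zero {k A : Type*} [Field k] [IsAlgClosed k]
    [AddCommGroup A] [Module k A] {σ κ ι : Type*} [Fintype σ] [Fintype κ] [Fintype ι]
    {f : κ → (σ → k) → A} (hf : ∀ i, f i ∈ polyFunctions k σ A) (hf0 : ∀ i, f i 0 = 0)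
    (Φ : A →ₗ[k] (ι → k)) (hcard : Fintype.card κ * Fintype.card ι < Fintype.card σ) :
    ∃ x ≠ 0, ∀ i, Φ (f i x) = 0 := by
  choose Q hQ using fun ij : κ × ι =>
    exists_eval_eq_of_mem_polyFunctions (LinearMap.proj ij.2 ∘ₗ Φ) (hf ij.1)
  obtain ⟨x, hx, hQx⟩ := exists_ne_forall_eval_eq_zero_of_card_lt Q
    (by simpa [Nat.card_eq_fintype_card] using hcard) 0 fun ij => by rw [hQ]; simp [hf0]
  exact ⟨x, hx, fun i => funext fun j => by simpa [hQ] using hQx (i, j)⟩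

/-- **Theorem 3.1.** Over an algebraically closed field `k`, polynomial maps
`p₁, …, pₙ : Aⁿ → A` of positive degree, whose leading forms have no common zero in
`Hⁿ \ {0}` for a finite-dimensional subspace `H`, and which map `Hⁿ` into a subspace `H'`
with `dim H' ≤ dim H`, have a common zero in `Hⁿ`. -/
theorem systems_of_equations_alg_closed
    {k A : Type*} [Field k] [IsAlgClosed k] [AddCommGroup A] [Module k A]
    (mul : A →ₗ[k] A →ₗ[k] A) {n : ℕ}
    (p L : Fin n → ((Fin n → A) → A)) (d : Fin n → ℕ)
    (hdeg : ∀ i, 0 < d i)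
    (hlead : ∀ i, HasLeadingForm mul (p i) (L i) (d i))
    (H H' : Submodule k A) [FiniteDimensional k H]
    (hnondeg : ∀ a : Fin n → A, (∀ ℓ, a ℓ ∈ H) → (∀ i, L i a = 0) → a = 0)
    (hdim : Module.rank k H' ≤ Module.rank k H)
    (hmaps : ∀ i, ∀ a : Fin n → A, (∀ ℓ, a ℓ ∈ H) → p i a ∈ H') :
    ∃ a : Fin n → A, (∀ ℓ, a ℓ ∈ H) ∧ ∀ i, p i a = 0 := by
  have : FiniteDimensional k H' :=
    Module.rank_lt_aleph0_iff.mp (hdim.trans_lt (Module.rank_lt_aleph0 k H))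
  have hfinrank : Module.finrank k H' ≤ Module.finrank k H :=
    Module.finrank_le_finrank_of_rank_le_rank (by simpa using hdim) (Module.rank_lt_aleph0 k H)
  obtain ⟨Φ, hΦ⟩ := H'.exists_linearMap_injOn
  have hΦ0 : ∀ v ∈ H', Φ v = 0 → v = 0 := fun v hv h => hΦ hv H'.zero_mem (by simp [h])
  obtain ⟨a₀, ha₀, ha₀H⟩ := H.exists_injective_linearMap_pi n
  -- the coordinate `none` is the homogenizing variable
  let a := a₀ ∘ₗ LinearMap.funLeft k k some
  choose P hP1 hP0 hPhom hPpoly using fun i => (hlead i).exists_homogenization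
  obtain ⟨y, hy, hPy⟩ := exists_ne_zero_forall_linearMap_apply_eq_zero
    (f := fun i y => P i (y none) (a y))
    (fun i => by
      simpa using hPpoly i (X none) _ fun ℓ => (LinearMap.proj ℓ ∘ₗ a).mem_polyFunctions)
    (fun i => by simpa [(hdeg i).ne'] using hPhom i 0 0 0) Φ (by simp; nlinarith)
  by_cases ht : y none = 0
  · refine absurd ?_ hy
    have hL : ∀ i, L i (a y) = 0 := fun i =>
      hΦ0 _ ((hlead i).apply_mem_of_forall_smul_mem fun l => hmaps i _ fun ℓ =>
        H.smul_mem l (ha₀H _ ℓ)) (by simpa [ht, hP0] using hPy i)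
    have hsome := ha₀ ((hnondeg _ (ha₀H _) hL).trans (map_zero a₀).symm)
    ext (_ | s)
    exacts [ht, congrFun hsome s]
  · refine ⟨a ((y none)⁻¹ • y), fun ℓ => ha₀H _ ℓ, fun i =>
      hΦ0 _ (hmaps i _ fun ℓ => ha₀H _ ℓ) ?_⟩
    have := hPhom i (y none) 1 (a ((y none)⁻¹ • y))
    rw [mul_one, ← map_smul, smul_inv_smul₀ ht, hP1] at this
    simpa [this, ht] using hPy i
end

section
/- Let m_1, m_2 : ℍ → ℍ be maps of the same degree d ≥ 1 of the form m_i(a) = c^{(i)}_0 a c^{(i)}_1 ⋯ a c^{(i)}_d with nonzero quaternion coefficients, and set ‖m_i‖ to be the product of the norms of the coefficients of m_i, so that ‖m_i(a)‖ = ‖m_i‖ · ‖a‖^d for all a ∈ ℍ. Assume ‖m_1‖ ≥ ‖m_2‖ > 0 and that m_1 + m_2 has no zero in ℍ ∖ {0}. Then for every t ∈ [0,1], the map a ↦ m_1(a) + (1−t) m_2(a) has no zero in ℍ ∖ {0}. -/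
open scoped Quaternion

/-- The monomial word `c₀ a c₁ a c₂ ⋯ c_{d-1} a c_d`, with `d` occurrences of `a`
separated by the coefficients `c 0, …, c d`. -/
noncomputable def mword : (d : ℕ) → (Fin (d + 1) → ℍ[ℝ]) → ℍ[ℝ] → ℍ[ℝ]
  | 0, c, _ => c 0
  | d + 1, c, a => c 0 * a * mword d (fun i => c i.succ) a

/-! Since `‖m₂(a)‖ ≤ ‖m₁(a)‖`, a zero `a` of `m₁ + (1 - t) m₂` forces
`‖m₂(a)‖ ≤ ‖m₁(a)‖ = (1 - t) ‖m₂(a)‖`, hence `t • m₂(a) = 0`, and `a` is already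
a zero of `m₁ + m₂`. -/

theorem norm_mword : ∀ (d : ℕ) (c : Fin (d + 1) → ℍ[ℝ]) (a : ℍ[ℝ]),
    ‖mword d c a‖ = (∏ j, ‖c j‖) * ‖a‖ ^ d
  | 0, c, a => by simp [mword]
  | d + 1, c, a => by
    rw [mword, norm_mul, norm_mul, norm_mword d, Fin.prod_univ_succ (fun j => ‖c j‖)]
    ring

theorem add_eq_zero_of_add_smul_eq_zero {E : Type*} [NormedAddCommGroup E] [NormedSpace ℝ E]
    {x y : E} {t : ℝ} (ht : t ∈ Set.Icc (0 : ℝ) 1) (hyx : ‖y‖ ≤ ‖x‖)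
    (h : x + (1 - t) • y = 0) : x + y = 0 := by
  have hx : ‖x‖ = (1 - t) * ‖y‖ := by
    rw [eq_neg_of_add_eq_zero_left h, norm_neg, norm_smul, Real.norm_of_nonneg (by linarith [ht.2])]
  have hty : t • y = 0 := by
    rw [← norm_eq_zero, norm_smul, Real.norm_of_nonneg ht.1]
    nlinarith [mul_nonneg ht.1 (norm_nonneg y)]
  calc x + y = x + (1 - t) • y + t • y := by module
    _ = 0 := by rw [h, hty, add_zero]

theorem quaternion_two_monomial_homotopy_nondegenerate_general
    (d : ℕ)
    (c₁ c₂ : Fin (d + 1) → ℍ[ℝ])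
    (hnorm : ∏ j, ‖c₂ j‖ ≤ ∏ j, ‖c₁ j‖)
    (hnondeg : ∀ a : ℍ[ℝ], a ≠ 0 → mword d c₁ a + mword d c₂ a ≠ 0) :
    ∀ t ∈ Set.Icc (0 : ℝ) 1, ∀ a : ℍ[ℝ], a ≠ 0 →
      mword d c₁ a + (1 - t) • mword d c₂ a ≠ 0 := by
  intro t ht a ha h
  refine hnondeg a ha (add_eq_zero_of_add_smul_eq_zero ht ?_ h)
  rw [norm_mword, norm_mword]
  gcongr

/-- If `m₁, m₂` are monomial maps of the same degree `d ≥ 1` with nonzero coefficients,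
`‖m₁‖ ≥ ‖m₂‖ > 0` (where `‖mᵢ‖` is the product of the norms of the coefficients), and
`m₁ + m₂` has no zero in `ℍ \ {0}`, then for every `t ∈ [0,1]` the map
`a ↦ m₁(a) + (1 - t) m₂(a)` has no zero in `ℍ \ {0}`. -/
theorem quaternion_two_monomial_homotopy_nondegenerate
    (d : ℕ) (hd : 1 ≤ d)
    (c₁ c₂ : Fin (d + 1) → ℍ[ℝ])
    (hc₁ : ∀ j, c₁ j ≠ 0) (hc₂ : ∀ j, c₂ j ≠ 0)
    (hnorm₂ : 0 < ∏ j, ‖c₂ j‖)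
    (hnorm : ∏ j, ‖c₂ j‖ ≤ ∏ j, ‖c₁ j‖)
    (hnondeg : ∀ a : ℍ[ℝ], a ≠ 0 → mword d c₁ a + mword d c₂ a ≠ 0) :
    ∀ t ∈ Set.Icc (0 : ℝ) 1, ∀ a : ℍ[ℝ], a ≠ 0 →
      mword d c₁ a + (1 - t) • mword d c₂ a ≠ 0 :=
  quaternion_two_monomial_homotopy_nondegenerate_general d c₁ c₂ hnorm hnondeg
end

section
/- In the real quaternion algebra ℍ, let c_0 = −1 − i + k, c_1 = −1 − i + j − k, c_2 = −i − j + k, c_3 = −1 + i + j + k, c_4 = 6i, and define p : ℍ → ℍ by p(a) = c_0 a² + a c_1 a + c_2 a c_3 a + c_4. Then p has no zero in ℍ: there is no a ∈ ℍ with p(a) = 0. -/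
/-!
Write `a = w + xi + yj + zk`. Apart from the constant `c₄ = 6i`, every term of `p(a)` is a
quadratic form in `(w, x, y, z)`, and `c₄` has no real, `j` or `k` part. So at a zero of `p` the
real, `j` and `k` parts of `p(a)` are three real quadratic forms vanishing at `a`; a
sum-of-squares certificate shows that their only common real zero is `a = 0`. But `p(0) = c₄ ≠ 0`.
-/

open scoped Quaternion

theorem Quaternion.eq_zero_of_quadratic_forms_eq_zero {a : ℍ[ℝ]}
    (hre : -a.re ^ 2 + a.imI ^ 2 + a.imJ ^ 2 + 5 * a.imK ^ 2 + 2 * a.re * a.imI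
      - 4 * a.re * a.imJ + 2 * a.re * a.imK - 4 * a.imI * a.imJ = 0)
    (hj : 4 * a.re ^ 2 + 2 * a.re * a.imI - 2 * a.re * a.imJ + 2 * a.re * a.imK
      - 4 * a.imI * a.imK = 0)
    (hk : -a.re ^ 2 - 3 * a.imI ^ 2 + a.imJ ^ 2 + a.imK ^ 2 - 4 * a.re * a.imI
      - 2 * a.re * a.imJ - 6 * a.re * a.imK = 0) :
    a = 0 := by
  rw [← Quaternion.normSq_eq_zero, Quaternion.normSq_def']
  generalize a.re = w, a.imI = x, a.imJ = y, a.imK = z at hre hj hk ⊢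
  -- Positivstellensatz certificate: `9585 (normSq a)²` plus a sum of squares lies in the ideal
  -- generated by the three forms.
  have certificate : 9585 * (w ^ 2 + x ^ 2 + y ^ 2 + z ^ 2) ^ 2 =
      -(214180 * (z ^ 2) ^ 2 + 1180 * (y ^ 2) ^ 2 + 389400 * (x * z) ^ 2 + 298000 * (x * y) ^ 2
        + 297940 * (x ^ 2) ^ 2 + 858600 * (w * z) ^ 2 + 277980 * (w * x) ^ 2
        + 93320 * (z ^ 2 + y * z) ^ 2) := by
    linear_combination
      (120923*z*z + 46660*y*z + 67083*y*y - 268938*x*z - 169490*x*y - 370739*x*x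
        - 174264*w*z - 154560*w*y + 52142*w*x - 9585*w*w) * hre
      + (-322748*z*z - 223330*y*z - 100470*y*y - 376210*x*z + 315598*x*y - 107508*x*x
        - 151326*w*z - 20896*w*y + 17828*w*x) * hj
      + (-287530*z*z - 46660*y*z - 56318*y*y + 53698*x*z + 437822*x*y - 226088*x*x
        - 450210*w*z + 109316*w*y) * hk
  have hnormSq : (w ^ 2 + x ^ 2 + y ^ 2 + z ^ 2) ^ 2 = 0 := by
    refine le_antisymm ?_ (sq_nonneg _)
    nlinarith [sq_nonneg (z ^ 2), sq_nonneg (y ^ 2), sq_nonneg (x * z), sq_nonneg (x * y),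
      sq_nonneg (x ^ 2), sq_nonneg (w * z), sq_nonneg (w * x), sq_nonneg (z ^ 2 + y * z)]
  exact pow_eq_zero_iff two_ne_zero |>.mp hnormSq

/-- The example of Section 4: with `c₀ = −1 − i + k`, `c₁ = −1 − i + j − k`,
`c₂ = −i − j + k`, `c₃ = −1 + i + j + k`, `c₄ = 6i`, the polynomial map
`p(a) = c₀a² + ac₁a + c₂ac₃a + c₄` has no zero in `ℍ`. -/
theorem quaternion_example_no_zero :
    let c₀ : ℍ[ℝ] := ⟨-1, -1, 0, 1⟩
    let c₁ : ℍ[ℝ] := ⟨-1, -1, 1, -1⟩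
    let c₂ : ℍ[ℝ] := ⟨0, -1, -1, 1⟩
    let c₃ : ℍ[ℝ] := ⟨-1, 1, 1, 1⟩
    let c₄ : ℍ[ℝ] := ⟨0, 6, 0, 0⟩
    ∀ a : ℍ[ℝ], c₀ * a ^ 2 + a * c₁ * a + c₂ * a * c₃ * a + c₄ ≠ 0 := by
  intro c₀ c₁ c₂ c₃ c₄ a hp
  obtain ⟨hre, -, hj, hk⟩ := Quaternion.ext_iff.mp hp
  simp only [pow_two, Quaternion.re_add, Quaternion.imJ_add, Quaternion.imK_add,
    Quaternion.re_mul, Quaternion.imI_mul, Quaternion.imJ_mul, Quaternion.imK_mul,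
    Quaternion.re_zero, Quaternion.imJ_zero, Quaternion.imK_zero] at hre hj hk
  simp only [c₀, c₁, c₂, c₃, c₄] at hre hj hk
  obtain rfl : a = 0 := Quaternion.eq_zero_of_quadratic_forms_eq_zero
    (by linear_combination hre) (by linear_combination hj) (by linear_combination hk)
  have hc₄ : c₄ = 0 := by simpa using hp
  exact absurd (Quaternion.ext_iff.mp hc₄).2.1 (by norm_num [c₄])
end

section
/- Let c_0, c_1 ∈ ℍ. The ℝ-linear map ℓ : ℍ → ℍ, x ↦ c_0 x + x c_1, is degenerate (i.e., there exists x ∈ ℍ ∖ {0} with c_0 x + x c_1 = 0) if and only if Re(c_0) = −Re(c_1) and ‖Im(c_0)‖ = ‖Im(c_1)‖, i.e. writing c_i = c_{i1} + c_{i2} i + c_{i3} j + c_{i4} k, if and only if c_{01} = −c_{11} and c_{02}² + c_{03}² + c_{04}² = c_{12}² + c_{13}² + c_{14}². -/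
/-!
If `c₀ x + x c₁ = 0` with `x ≠ 0`, then `c₀ = x (-c₁) x⁻¹` is conjugate to `-c₁`, and conjugation
preserves the real part (as `Re(ab) = Re(ba)`) and the norm. Conversely, once the real parts agree,
`c₀ x = x (-c₁)` reduces to `u x = x v` for the imaginary parts `u = Im c₀`, `v = -Im c₁`, which
have equal norms. Pure quaternions square to minus their norm, so `x = u + v` is a solution, since
`u (u + v) = u v - ‖u‖² = (u + v) v`; when `u + v = 0`, any nonzero `x` orthogonal to `u` is one.
-/

open scoped Quaternion

namespace Quaternion

section CommRing

variable {R : Type*} [CommRing R]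

theorem re_mul_comm (a b : ℍ[R]) : (a * b).re = (b * a).re := by
  simp only [re_mul]
  ring

theorem mul_eq_mul_iff_im_mul_eq_mul_im {a b : ℍ[R]} (h : a.re = b.re) (x : ℍ[R]) :
    a * x = x * b ↔ a.im * x = x * b.im := by
  conv_lhs => rw [← re_add_im a, ← re_add_im b, add_mul, mul_add, coe_commutes, h]
  exact add_right_inj _

theorem normSq_eq_re_sq_add_normSq_im (a : ℍ[R]) : normSq a = a.re ^ 2 + normSq a.im := by
  simp only [normSq_def', re_im, imI_im, imJ_im, imK_im]
  ring

def ofIm (b c d : R) : ℍ[R] := ⟨0, b, c, d⟩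

@[simp] theorem re_ofIm (b c d : R) : (ofIm b c d).re = 0 := rfl
@[simp] theorem imI_ofIm (b c d : R) : (ofIm b c d).imI = b := rfl
@[simp] theorem imJ_ofIm (b c d : R) : (ofIm b c d).imJ = c := rfl
@[simp] theorem imK_ofIm (b c d : R) : (ofIm b c d).imK = d := rfl

theorem exists_ne_zero_mul_eq_mul_neg_of_re_eq_zero [Nontrivial R] {u : ℍ[R]} (hu : u.re = 0) :
    ∃ x ≠ 0, u * x = x * -u := by
  by_cases hIJ : u.imI = 0 ∧ u.imJ = 0
  · refine ⟨ofIm 1 0 0, fun h => one_ne_zero (congrArg QuaternionAlgebra.imI h), ?_⟩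
    ext <;> simp [hu, hIJ.1, hIJ.2]
  · refine ⟨ofIm (-u.imJ) u.imI 0, fun h => hIJ ⟨?_, ?_⟩, ?_⟩
    · simpa using congrArg QuaternionAlgebra.imJ h
    · simpa using congrArg QuaternionAlgebra.imI h
    · ext <;> simp [hu] <;> ring

end CommRing

section Field

variable {R : Type*} [Field R] [LinearOrder R] [IsStrictOrderedRing R]

theorem re_eq_and_normSq_eq_of_mul_eq_mul {a b x : ℍ[R]} (hx : x ≠ 0) (h : a * x = x * b) :
    a.re = b.re ∧ normSq a = normSq b := by
  have hN : normSq x ≠ 0 := normSq_ne_zero.2 hx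
  constructor
  · have hre : (a * x * star x).re = (x * b * star x).re := by rw [h]
    rw [mul_assoc, self_mul_star, mul_assoc, re_mul_comm x, mul_assoc, star_mul_self,
      mul_coe_eq_smul, mul_coe_eq_smul, re_smul, re_smul] at hre
    exact mul_left_cancel₀ hN hre
  · have hnorm := congrArg normSq h
    rw [map_mul, map_mul, mul_comm (normSq x)] at hnorm
    exact mul_right_cancel₀ hN hnorm

theorem exists_ne_zero_mul_eq_mul_of_re_eq_zero {u v : ℍ[R]} (hu : u.re = 0) (hv : v.re = 0)
    (h : normSq u = normSq v) : ∃ x ≠ 0, u * x = x * v := by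
  by_cases huv : u + v = 0
  · rw [eq_neg_of_add_eq_zero_right huv]
    exact exists_ne_zero_mul_eq_mul_neg_of_re_eq_zero hu
  · refine ⟨u + v, huv, ?_⟩
    have hu2 : u * u = -normSq u := by rw [← sq, sq_eq_neg_normSq.2 hu]
    have hv2 : v * v = -normSq v := by rw [← sq, sq_eq_neg_normSq.2 hv]
    rw [mul_add, add_mul, hu2, hv2, h, add_comm]

theorem exists_ne_zero_mul_eq_mul_iff (a b : ℍ[R]) :
    (∃ x ≠ 0, a * x = x * b) ↔ a.re = b.re ∧ normSq a = normSq b := by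
  refine ⟨fun ⟨x, hx, h⟩ => re_eq_and_normSq_eq_of_mul_eq_mul hx h, fun ⟨hre, hnorm⟩ => ?_⟩
  rw [normSq_eq_re_sq_add_normSq_im a, normSq_eq_re_sq_add_normSq_im b, hre, add_right_inj] at hnorm
  obtain ⟨x, hx, h⟩ := exists_ne_zero_mul_eq_mul_of_re_eq_zero (re_im a) (re_im b) hnorm
  exact ⟨x, hx, (mul_eq_mul_iff_im_mul_eq_mul_im hre x).2 h⟩

end Field

end Quaternion

/-- For `c₀, c₁ ∈ ℍ`, the linear map `x ↦ c₀x + xc₁` is degenerate (has a nonzero zero)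
iff `Re(c₀) = −Re(c₁)` and the imaginary parts of `c₀` and `c₁` have the same Euclidean
norm, i.e. `c₀.imI² + c₀.imJ² + c₀.imK² = c₁.imI² + c₁.imJ² + c₁.imK²`. -/
theorem quaternion_linear_form_degenerate_iff (c₀ c₁ : ℍ[ℝ]) :
    (∃ x : ℍ[ℝ], x ≠ 0 ∧ c₀ * x + x * c₁ = 0) ↔
      (c₀.re = -c₁.re ∧
        c₀.imI ^ 2 + c₀.imJ ^ 2 + c₀.imK ^ 2 = c₁.imI ^ 2 + c₁.imJ ^ 2 + c₁.imK ^ 2) := by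
  have hform : ∀ x : ℍ[ℝ], c₀ * x + x * c₁ = 0 ↔ c₀ * x = x * -c₁ := fun x => by
    rw [add_eq_zero_iff_eq_neg, mul_neg]
  simp only [hform, Quaternion.exists_ne_zero_mul_eq_mul_iff, Quaternion.re_neg,
    Quaternion.normSq_neg]
  refine and_congr_right fun hre => ?_
  rw [Quaternion.normSq_def', Quaternion.normSq_def', hre, neg_sq]
  simp only [add_assoc, add_right_inj]
end
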